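/- If H is an n×n real symmetric positive semidefinite matrix with H_ii = 1 for all i and Q is an n×n real symmetric positive semidefinite matrix, then Tr(Q H) ≤ Tr(Q (arcsin∘H)), where (arcsin∘H)_ij = arcsin(H_ij) denotes the entrywise arcsine of H. -/

import Mathlib

/-!
The arcsine has the Taylor expansion `arcsin t = ∑ cₖ t^(2k+1)` with `cₖ ≥ 0` on `(-1, 1)`
(integrate the binomial series of `(1 - t²)^(-1/2)`). By the Schur product theorem every
entrywise power of a positive semidefinite matrix is positive semidefinite, so `arcsin∘H - H`
is a convergent sum of positive semidefinite matrices, and `Tr(Q M) ≥ 0` for positive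
semidefinite `Q` and `M`. Entries `±1` of `H` are out of reach of the series; they are handled
by applying this to `r • H` and letting `r → 1⁻`.
-/

open Matrix

theorem Ring.multichoose_pos {R : Type*} [CommRing R] [LinearOrder R] [IsStrictOrderedRing R]
    [BinomialRing R] {r : R} (hr : 0 < r) (n : ℕ) : 0 < Ring.multichoose r n := by
  have h := Ring.factorial_nsmul_multichoose_eq_ascPochhammer r n
  rw [Polynomial.ascPochhammer_smeval_eq_eval] at h
  exact (nsmul_pos_iff n.factorial_ne_zero).mp (h ▸ ascPochhammer_pos n r hr)

namespace Real

theorem hasSum_multichoose_mul_pow (a : ℝ) {x : ℝ} (hx : |x| < 1) :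
    HasSum (fun n => Ring.multichoose a n * x ^ n) (1 / (1 - x) ^ a) := by
  have h := (one_div_one_sub_rpow_hasFPowerSeriesOnBall_zero a).hasSum
    (y := x) (by simpa [enorm_eq_nnnorm, ← NNReal.coe_lt_coe] using hx)
  simpa [FormalMultilinearSeries.ofScalars_apply_eq, Ring.multichoose_eq, mul_comm] using h

theorem hasSum_one_div_sqrt_one_sub_sq {t : ℝ} (ht : |t| < 1) :
    HasSum (fun n => Ring.multichoose (1 / 2 : ℝ) n * (t ^ 2) ^ n) (1 / √(1 - t ^ 2)) := by
  rw [sqrt_eq_rpow]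
  refine hasSum_multichoose_mul_pow _ ?_
  rw [abs_pow]
  exact pow_lt_one₀ (abs_nonneg t) ht two_ne_zero

noncomputable def arcsinCoeff (n : ℕ) : ℝ := Ring.multichoose (1 / 2 : ℝ) n / (2 * n + 1)

theorem arcsinCoeff_nonneg (n : ℕ) : 0 ≤ arcsinCoeff n :=
  div_nonneg (Ring.multichoose_pos one_half_pos n).le (by positivity)

theorem summable_arcsinCoeff_mul_pow {t : ℝ} (ht : |t| < 1) :
    Summable fun n => arcsinCoeff n * t ^ (2 * n + 1) := by
  refine Summable.of_norm_bounded (hasSum_one_div_sqrt_one_sub_sq ht).summable fun n => ?_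
  have hb := (Ring.multichoose_pos (one_half_pos (α := ℝ)) n).le
  have hc : arcsinCoeff n ≤ Ring.multichoose (1 / 2 : ℝ) n :=
    div_le_self hb (by linarith [n.cast_nonneg (α := ℝ)])
  rw [norm_mul, norm_eq_abs, norm_eq_abs, abs_of_nonneg (arcsinCoeff_nonneg n), abs_pow,
    ← sq_abs, ← pow_mul]
  exact mul_le_mul hc (pow_le_pow_of_le_one (abs_nonneg t) ht.le (by omega)) (by positivity) hb

theorem hasDerivAt_tsum_arcsinCoeff_mul_pow {t : ℝ} (ht : |t| < 1) :
    HasDerivAt (fun y => ∑' n, arcsinCoeff n * y ^ (2 * n + 1)) (1 / √(1 - t ^ 2)) t := by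
  obtain ⟨r, htr, hr1⟩ := exists_between ht
  have hr : |r| < 1 := by rwa [abs_of_nonneg ((abs_nonneg t).trans htr.le)]
  rw [← (hasSum_one_div_sqrt_one_sub_sq ht).tsum_eq]
  refine hasDerivAt_tsum_of_isPreconnected (g := fun n y => arcsinCoeff n * y ^ (2 * n + 1))
    (g' := fun n y => Ring.multichoose (1 / 2 : ℝ) n * (y ^ 2) ^ n)
    (hasSum_one_div_sqrt_one_sub_sq hr).summable Metric.isOpen_ball
    (convex_ball (0 : ℝ) r).isPreconnected (fun n y _ => ?_) (fun n y hy => ?_)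
    (Metric.mem_ball_self (by linarith [abs_nonneg t])) (by simp) (by simpa using htr)
  · refine ((hasDerivAt_pow (2 * n + 1) y).const_mul (arcsinCoeff n)).congr_deriv ?_
    rw [arcsinCoeff, Nat.add_sub_cancel, pow_mul]
    field_simp
    push_cast
    ring
  · have hyr : y ^ 2 ≤ r ^ 2 := by
      rw [mem_ball_zero_iff, norm_eq_abs] at hy
      exact sq_le_sq' (by linarith [neg_abs_le y]) (by linarith [le_abs_self y])
    have hb := (Ring.multichoose_pos (one_half_pos (α := ℝ)) n).le
    rw [norm_eq_abs, abs_of_nonneg (by positivity)]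
    gcongr

theorem hasSum_arcsin {t : ℝ} (ht : |t| < 1) :
    HasSum (fun n => arcsinCoeff n * t ^ (2 * n + 1)) (arcsin t) := by
  have hball : ∀ {y : ℝ}, y ∈ Metric.ball 0 1 ↔ |y| < 1 := by simp
  have hseries : ∀ y ∈ Metric.ball (0 : ℝ) 1,
      HasDerivAt (fun y => ∑' n, arcsinCoeff n * y ^ (2 * n + 1)) (1 / √(1 - y ^ 2)) y :=
    fun y hy => hasDerivAt_tsum_arcsinCoeff_mul_pow (hball.mp hy)
  have harcsin : ∀ y ∈ Metric.ball (0 : ℝ) 1, HasDerivAt arcsin (1 / √(1 - y ^ 2)) y := by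
    intro y hy
    obtain ⟨h₁, h₂⟩ := abs_lt.mp (hball.mp hy)
    exact hasDerivAt_arcsin h₁.ne' h₂.ne
  have heq := Metric.isOpen_ball.eqOn_of_deriv_eq (convex_ball (0 : ℝ) 1).isPreconnected
    (fun y hy => (hseries y hy).differentiableAt.differentiableWithinAt)
    (fun y hy => (harcsin y hy).differentiableAt.differentiableWithinAt)
    (fun y hy => (hseries y hy).deriv.trans (harcsin y hy).deriv.symm)
    (Metric.mem_ball_self one_pos) (by simp)
  rw [← heq (hball.mpr ht)]
  exact (summable_arcsinCoeff_mul_pow ht).hasSum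

end Real

namespace Matrix

section RCLike

open scoped ComplexOrder

variable {n 𝕜 : Type*} [Fintype n] [RCLike 𝕜]

theorem PosSemidef.map_pow {A : Matrix n n 𝕜} (hA : A.PosSemidef) (k : ℕ) :
    (A.map (· ^ k)).PosSemidef := by
  induction k with
  | zero =>
    convert posSemidef_vecMulVec_self_star (1 : n → 𝕜) using 1
    ext; simp
  | succ k ih =>
    convert ih.hadamard hA using 1
    ext; simp [pow_succ]

theorem PosSemidef.of_hasSum {ι : Type*} {f : ι → Matrix n n 𝕜} {M : Matrix n n 𝕜}
    (hf : HasSum f M) (h : ∀ k, (f k).PosSemidef) : M.PosSemidef := by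
  refine .of_dotProduct_mulVec_nonneg ?_ fun x => ?_
  · refine hf.matrix_conjTranspose.unique ?_
    simpa only [(h _).isHermitian.eq] using hf
  · have hx : HasSum (fun k => star x ⬝ᵥ f k *ᵥ x) (star x ⬝ᵥ M *ᵥ x) := by
      simp only [dotProduct, mulVec]
      exact hasSum_sum fun i _ => (hasSum_sum fun j _ =>
        ((Pi.hasSum.mp (Pi.hasSum.mp hf i) j).mul_right (x j))).mul_left (star x i)
    exact hx.nonneg fun k => (h k).dotProduct_mulVec_nonneg x

theorem PosSemidef.of_hasSum_mul_pow {ι : Type*} {a : ι → 𝕜} {e : ι → ℕ}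
    {A M : Matrix n n 𝕜} (hA : A.PosSemidef) (ha : ∀ k, 0 ≤ a k)
    (hM : ∀ i j, HasSum (fun k => a k * A i j ^ e k) (M i j)) : M.PosSemidef :=
  .of_hasSum (f := fun k => a k • A.map (· ^ e k))
    (Pi.hasSum.mpr fun i => Pi.hasSum.mpr fun j => hM i j)
    fun k => (hA.map_pow (e k)).smul (ha k)

theorem PosSemidef.trace_mul_nonneg {A B : Matrix n n 𝕜} (hA : A.PosSemidef)
    (hB : B.PosSemidef) : 0 ≤ (A * B).trace := by
  classical
  open scoped MatrixOrder in
  obtain ⟨C, rfl⟩ := CStarAlgebra.nonneg_iff_eq_star_mul_self.mp hB.nonneg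
  rw [← Matrix.mul_assoc, trace_mul_comm, ← Matrix.mul_assoc]
  exact (hA.mul_mul_conjTranspose_same C).trace_nonneg

end RCLike

variable {n : Type*}

theorem PosSemidef.sq_apply_le {A : Matrix n n ℝ} (hA : A.PosSemidef) (i j : n) :
    A i j ^ 2 ≤ A i i * A j j := by
  have h := (hA.submatrix ![i, j]).det_nonneg
  have hsym : A j i = A i j := by simpa using hA.isHermitian.apply i j
  simp only [det_fin_two, submatrix_apply, cons_val_zero, cons_val_one, hsym] at h
  linarith [sq (A i j)]

theorem PosSemidef.map_arcsin_sub [Fintype n] {A : Matrix n n ℝ} (hA : A.PosSemidef)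
    (h : ∀ i j, |A i j| < 1) : (A.map Real.arcsin - A).PosSemidef := by
  refine hA.of_hasSum_mul_pow (e := fun k => 2 * (k + 1) + 1)
    (fun k => Real.arcsinCoeff_nonneg (k + 1)) fun i j => ?_
  simpa [Real.arcsinCoeff] using (hasSum_nat_add_iff' 1).mpr (Real.hasSum_arcsin (h i j))

end Matrix

/-- If `H` is symmetric PSD with unit diagonal and `Q` is symmetric PSD,
then `Tr(Q H) ≤ Tr(Q (arcsin∘H))`, where `arcsin∘H` is the entrywise arcsine of `H`. -/
theorem trace_le_trace_arcsin {n : ℕ} (H : Matrix (Fin n) (Fin n) ℝ)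
    (hH : H.PosSemidef) (hdiag : ∀ i, H i i = 1)
    (Q : Matrix (Fin n) (Fin n) ℝ) (hQ : Q.PosSemidef) :
    (Q * H).trace ≤ (Q * Matrix.of fun i j => Real.arcsin (H i j)).trace := by
  show _ ≤ (Q * H.map Real.arcsin).trace
  have habs : ∀ i j, |H i j| ≤ 1 := fun i j => by
    simpa [hdiag, sq_le_one_iff_abs_le_one] using hH.sq_apply_le i j
  have hscaled : ∀ r ∈ Set.Ioo (0 : ℝ) 1,
      r * (Q * H).trace ≤ (Q * (r • H).map Real.arcsin).trace := by
    intro r ⟨hr₀, hr₁⟩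
    have hr : ∀ i j, |(r • H) i j| < 1 := fun i j => by
      rw [Matrix.smul_apply, smul_eq_mul, abs_mul, abs_of_pos hr₀]
      nlinarith [habs i j, abs_nonneg (H i j)]
    have := hQ.trace_mul_nonneg ((hH.smul hr₀.le).map_arcsin_sub hr)
    rwa [Matrix.mul_sub, trace_sub, mul_smul_comm, trace_smul, smul_eq_mul, sub_nonneg] at this
  have hcont : Continuous fun r : ℝ => (Q * (r • H).map Real.arcsin).trace := by fun_prop
  have hlim := le_of_tendsto_of_tendsto
    ((continuous_id.mul continuous_const).tendsto 1 |>.mono_left nhdsWithin_le_nhds)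
    (hcont.tendsto 1 |>.mono_left nhdsWithin_le_nhds)
    (Filter.mem_of_superset (Ioo_mem_nhdsLT one_pos) hscaled)
  simpa using hlim
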